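/- Let u, v : ℝⁿ → (-∞,∞] be convex, proper, lower semicontinuous. If the pointwise minimum u ∧ v is convex, then so is u* ∧ v*. Moreover (u ∧ v)* = u* ∨ v* and, when u ∧ v is convex, (u ∨ v)* = u* ∧ v*. -/

import Mathlib

open MeasureTheory Filter

noncomputable def conj {n : ℕ} (u : EuclideanSpace ℝ (Fin n) → EReal)
    (x : EuclideanSpace ℝ (Fin n)) : EReal :=
  ⨆ y, ((inner ℝ x y : ℝ) : EReal) - u y

/-- Convexity for extended-real-valued functions on `ℝⁿ`. -/
def ErealConvexOn {n : ℕ} (u : EuclideanSpace ℝ (Fin n) → EReal) : Prop :=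
  ∀ x y : EuclideanSpace ℝ (Fin n), ∀ a b : ℝ, 0 ≤ a → 0 ≤ b → a + b = 1 →
    u (a • x + b • y) ≤ (a : EReal) * u x + (b : EReal) * u y

/-- Proper: never `-∞` and not identically `+∞`. -/
def EProper {n : ℕ} (u : EuclideanSpace ℝ (Fin n) → EReal) : Prop :=
  (∀ x, u x ≠ ⊥) ∧ ∃ x, u x ≠ ⊤

/-- Coercive: `u x → ∞` as `‖x‖ → ∞`. -/
def ECoercive {n : ℕ} (u : EuclideanSpace ℝ (Fin n) → EReal) : Prop :=
  ∀ M : ℝ, ∃ R : ℝ, ∀ x, R ≤ ‖x‖ → (M : EReal) ≤ u x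

/-- Super-coercive: `u x / ‖x‖ → ∞` as `‖x‖ → ∞`. -/
def ESuperCoercive {n : ℕ} (u : EuclideanSpace ℝ (Fin n) → EReal) : Prop :=
  ∀ M : ℝ, ∃ R : ℝ, ∀ x, R ≤ ‖x‖ → ((M * ‖x‖ : ℝ) : EReal) ≤ u x

/-! The only non-formal identity is `(u ∨ v)* ≥ u* ∧ v*`, i.e. an affine minorant `ℓ` of `u ∨ v`
minorizes `u` or `v`. Otherwise pick `u y₁ < m₁ < ℓ y₁` and `v y₂ < m₂ < ℓ y₂`. By convexity of
`u ∧ v`, on the segment `[y₁, y₂]` the function `u ∧ v` lies below the chord through `m₁` and `m₂`,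
which lies strictly below `ℓ ≤ u ∨ v`; so the segment splits into the points where `u` lies below the
chord and those where `v` does. By lower semicontinuity both parts are closed, and a common point
would put `u ∨ v` below `ℓ`, contradicting connectedness. Convexity of `u* ∧ v* = (u ∨ v)*` is then that of any conjugate. -/

section Semicontinuity

variable {X β : Type*} [TopologicalSpace X] [LinearOrder β] [DenselyOrdered β]

lemma LowerSemicontinuous.isClosed_le {f g : X → β} (hf : LowerSemicontinuous f)
    (hg : UpperSemicontinuous g) : IsClosed {x | f x ≤ g x} := by
  refine isOpen_compl_iff.1 (isOpen_iff_mem_nhds.2 fun x hx => ?_)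
  obtain ⟨r, hgr, hrf⟩ := exists_between (not_le.1 hx)
  filter_upwards [hg x r hgr, hf x r hrf] with y hgy hfy
  exact not_le.2 (hgy.trans hfy)

lemma IsPreconnected.exists_max_le_of_forall_min_le {S : Set X} (hS : IsPreconnected S)
    {f g h : X → β} (hf : LowerSemicontinuous f) (hg : LowerSemicontinuous g)
    (hh : UpperSemicontinuous h) (hmin : ∀ x ∈ S, min (f x) (g x) ≤ h x)
    (hf' : ∃ x ∈ S, f x ≤ h x) (hg' : ∃ x ∈ S, g x ≤ h x) :
    ∃ x ∈ S, max (f x) (g x) ≤ h x := by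
  obtain ⟨x, hxS, hfx, hgx⟩ := isPreconnected_closed_iff.1 hS _ _ (hf.isClosed_le hh)
    (hg.isClosed_le hh) (fun x hx => min_le_iff.1 (hmin x hx)) hf' hg'
  exact ⟨x, hxS, max_le hfx hgx⟩

end Semicontinuity

lemma EReal.coe_add_coe_sub_le {a b : ℝ} (ha : 0 ≤ a) (hb : 0 ≤ b) (hab : a + b = 1)
    (r s : ℝ) (c : EReal) :
    ((a * r + b * s : ℝ) : EReal) - c ≤ a * ((r : EReal) - c) + b * ((s : EReal) - c) := by
  induction c with
  | bot =>
    rw [EReal.coe_sub_bot, EReal.coe_sub_bot, EReal.coe_sub_bot,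
      ← EReal.right_distrib_of_nonneg (by exact_mod_cast ha) (by exact_mod_cast hb),
      ← EReal.coe_add, hab, EReal.coe_one, one_mul]
  | top => simp
  | coe c =>
    norm_cast
    linear_combination c * hab

section Conjugate

variable {n : ℕ}

lemma conj_le_coe_iff (w : EuclideanSpace ℝ (Fin n) → EReal) (x : EuclideanSpace ℝ (Fin n))
    (c : ℝ) : conj w x ≤ c ↔ ∀ y, ((inner ℝ x y - c : ℝ) : EReal) ≤ w y := by
  refine iSup_le_iff.trans (forall_congr' fun y => ?_)
  rw [EReal.sub_le_iff_le_add (.inr (EReal.coe_ne_top c)) (.inr (EReal.coe_ne_bot c)), add_comm,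
    ← EReal.sub_le_iff_le_add (.inl (EReal.coe_ne_bot c)) (.inl (EReal.coe_ne_top c)),
    EReal.coe_sub]

lemma conj_antitone : Antitone (conj (n := n)) :=
  fun _ _ h _ => iSup_mono fun y => EReal.sub_le_sub le_rfl (h y)

lemma conj_convexOn (w : EuclideanSpace ℝ (Fin n) → EReal) : ErealConvexOn (conj w) := by
  intro x y a b ha hb hab
  refine iSup_le fun z => ?_
  calc ((inner ℝ (a • x + b • y) z : ℝ) : EReal) - w z
      = ((a * inner ℝ x z + b * inner ℝ y z : ℝ) : EReal) - w z := by
        rw [inner_add_left, real_inner_smul_left, real_inner_smul_left]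
    _ ≤ a * (((inner ℝ x z : ℝ) : EReal) - w z) + b * (((inner ℝ y z : ℝ) : EReal) - w z) :=
        EReal.coe_add_coe_sub_le ha hb hab _ _ _
    _ ≤ a * conj w x + b * conj w y :=
        add_le_add
          (mul_le_mul_of_nonneg_left (le_iSup (fun z => ((inner ℝ x z : ℝ) : EReal) - w z) z)
            (mod_cast ha))
          (mul_le_mul_of_nonneg_left (le_iSup (fun z => ((inner ℝ y z : ℝ) : EReal) - w z) z)
            (mod_cast hb))

lemma conj_min_eq (u v : EuclideanSpace ℝ (Fin n) → EReal) :
    conj (fun x => min (u x) (v x)) = fun x => max (conj u x) (conj v x) := by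
  funext x
  refine (iSup_congr fun y => ?_).trans iSup_sup_eq
  exact Antitone.map_min fun _ _ h => EReal.sub_le_sub le_rfl h

open AffineMap Set in
lemma affine_le_or_of_le_max {u v : EuclideanSpace ℝ (Fin n) → EReal}
    (hul : LowerSemicontinuous u) (hvl : LowerSemicontinuous v)
    (hmin : ErealConvexOn (fun x => min (u x) (v x))) (ℓ : EuclideanSpace ℝ (Fin n) →ᵃ[ℝ] ℝ)
    (hℓ : ∀ y, (ℓ y : EReal) ≤ max (u y) (v y)) :
    (∀ y, (ℓ y : EReal) ≤ u y) ∨ ∀ y, (ℓ y : EReal) ≤ v y := by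
  by_contra! ⟨⟨y₁, hu⟩, ⟨y₂, hv⟩⟩
  obtain ⟨m₁, hum, hmℓ₁⟩ := EReal.exists_between_coe_real hu
  obtain ⟨m₂, hvm, hmℓ₂⟩ := EReal.exists_between_coe_real hv
  let p : ℝ → EuclideanSpace ℝ (Fin n) := lineMap y₁ y₂
  let chord : ℝ → EReal := fun t => (lineMap m₁ m₂ t : ℝ)
  have hchord : ∀ t ∈ Icc (0 : ℝ) 1, min (u (p t)) (v (p t)) ≤ chord t := by
    rintro t ⟨ht₀, ht₁⟩
    calc min (u (p t)) (v (p t))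
        ≤ ((1 - t : ℝ) : EReal) * min (u y₁) (v y₁) + (t : EReal) * min (u y₂) (v y₂) := by
          simpa only [p, lineMap_apply_module] using
            hmin y₁ y₂ (1 - t) t (by linarith) ht₀ (by ring)
      _ ≤ ((1 - t : ℝ) : EReal) * m₁ + (t : EReal) * m₂ :=
          add_le_add
            (mul_le_mul_of_nonneg_left ((min_le_left _ _).trans hum.le) (mod_cast by linarith))
            (mul_le_mul_of_nonneg_left ((min_le_right _ _).trans hvm.le) (mod_cast ht₀))
      _ = chord t := by
          simp only [chord, lineMap_apply_module, smul_eq_mul]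
          norm_cast
  obtain ⟨t, ⟨ht₀, ht₁⟩, hmax⟩ := isPreconnected_Icc.exists_max_le_of_forall_min_le
    (hul.comp lineMap_continuous) (hvl.comp lineMap_continuous)
    (continuous_coe_real_ereal.comp lineMap_continuous).upperSemicontinuous hchord
    ⟨0, left_mem_Icc.2 zero_le_one, by simpa [p, chord] using hum.le⟩
    ⟨1, right_mem_Icc.2 zero_le_one, by simpa [p, chord] using hvm.le⟩
  have hchord_lt : lineMap m₁ m₂ t < ℓ (p t) := by
    rw [apply_lineMap]
    exact lineMap_strict_mono_endpoints (mod_cast hmℓ₁) (mod_cast hmℓ₂) ht₀ ht₁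
  exact (hℓ (p t)).not_gt (hmax.trans_lt (EReal.coe_lt_coe_iff.2 hchord_lt))

lemma conj_max_eq {u v : EuclideanSpace ℝ (Fin n) → EReal}
    (hul : LowerSemicontinuous u) (hvl : LowerSemicontinuous v)
    (hmin : ErealConvexOn (fun x => min (u x) (v x))) :
    conj (fun x => max (u x) (v x)) = fun x => min (conj u x) (conj v x) := by
  funext x
  refine le_antisymm (le_min (conj_antitone (fun y => le_max_left (u y) (v y)) x)
    (conj_antitone (fun y => le_max_right (u y) (v y)) x)) ?_
  by_contra! hlt
  obtain ⟨c, hc, hcu, hcv⟩ : ∃ c : ℝ, conj (fun x => max (u x) (v x)) x < c ∧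
      (c : EReal) < conj u x ∧ (c : EReal) < conj v x := by
    obtain ⟨c, hc, hcmin⟩ := EReal.exists_between_coe_real hlt
    exact ⟨c, hc, lt_min_iff.1 hcmin⟩
  let ℓ : EuclideanSpace ℝ (Fin n) →ᵃ[ℝ] ℝ :=
    (innerₛₗ ℝ x).toAffineMap - AffineMap.const ℝ (EuclideanSpace ℝ (Fin n)) c
  rcases affine_le_or_of_le_max hul hvl hmin ℓ ((conj_le_coe_iff _ x c).1 hc.le) with h | h
  · exact hcu.not_ge ((conj_le_coe_iff u x c).2 h)
  · exact hcv.not_ge ((conj_le_coe_iff v x c).2 h)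

end Conjugate

theorem stmt4_general (n : ℕ) (u v : EuclideanSpace ℝ (Fin n) → EReal)
    (hul : LowerSemicontinuous u) (hvl : LowerSemicontinuous v)
    (hmin : ErealConvexOn (fun x => min (u x) (v x))) :
    ErealConvexOn (fun x => min (conj u x) (conj v x)) ∧
    conj (fun x => min (u x) (v x)) = (fun x => max (conj u x) (conj v x)) ∧
    conj (fun x => max (u x) (v x)) = (fun x => min (conj u x) (conj v x)) := by
  have hmax := conj_max_eq hul hvl hmin
  exact ⟨hmax ▸ conj_convexOn _, conj_min_eq u v, hmax⟩

/-- If `u ∧ v` is convex then so is `u* ∧ v*`; moreover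
`(u ∧ v)* = u* ∨ v*` and `(u ∨ v)* = u* ∧ v*`. -/
theorem stmt4 (n : ℕ) (u v : EuclideanSpace ℝ (Fin n) → EReal)
    (huc : ErealConvexOn u) (hup : EProper u) (hul : LowerSemicontinuous u)
    (hvc : ErealConvexOn v) (hvp : EProper v) (hvl : LowerSemicontinuous v)
    (hmin : ErealConvexOn (fun x => min (u x) (v x))) :
    ErealConvexOn (fun x => min (conj u x) (conj v x)) ∧
    conj (fun x => min (u x) (v x)) = (fun x => max (conj u x) (conj v x)) ∧
    conj (fun x => max (u x) (v x)) = (fun x => min (conj u x) (conj v x)) :=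
  stmt4_general n u v hul hvl hmin
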